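/- Let X and Y be locally compact Hausdorff spaces and let T : C₀(X)⁺ → C₀(Y)⁺ be a bijection satisfying ‖T(f+g)‖ = ‖Tf + Tg‖ for all f, g ∈ C₀(X)⁺. Let y ∈ Y and let x₀ ∈ X be the unique point with ⋂_{f ∈ F_y} supp(f) = {x₀}, where F_y = {f ∈ C₀(X)⁺ : Tf(y) > 0}. If e₁, e₂ ∈ C₀(X)⁺ each equal 1 on some (possibly different) open neighborhood of x₀, then Te₁(y) = Te₂(y). -/

import Mathlib

open scoped ZeroAtInfty

/-- The positive cone of `C₀(X, ℝ)`. -/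
def posCone (X : Type*) [TopologicalSpace X] : Set C₀(X, ℝ) :=
  {f | ∀ x, 0 ≤ f x}

/-!
Point values of a nonnegative `P ∈ C₀(Y)` are visible in norms: if `v` is a bump of height `1` at
`y` supported where `P < P y + ε`, and `t ≥ ‖P‖`, then `‖P + t • v‖` lies between `t + P y` and
`t + P y + ε`. As `T` maps onto the cone, `t • v = T g` for some `g`, and norm additivity turns
`‖T e + t • v‖` into `‖T (e + g)‖`. This way one shows that `T` is monotone and that adding `d ≥ 0`
with `T d y = 0` does not change the value at `y`. If `e ≥ m` agree near `x₀`, then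
`x₀ ∉ supp (e - m)`, so `T (e - m) y = 0` and `T e y = T m y`; take `m = min e₁ e₂`.
-/

open Set Filter Topology

namespace ZeroAtInftyContinuousMap

section Min

variable {α β : Type*} [TopologicalSpace α] [TopologicalSpace β] [LinearOrder β]
  [OrderClosedTopology β] [Zero β]

instance instMin : Min C₀(α, β) where
  min f g := ⟨⟨fun x => min (f x) (g x), (map_continuous f).min (map_continuous g)⟩,
    by simpa using (zero_at_infty f).min (zero_at_infty g)⟩

@[simp] lemma min_apply (f g : C₀(α, β)) (x : α) : min f g x = min (f x) (g x) := rfl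

end Min

variable {Y : Type*} [TopologicalSpace Y]

lemma apply_le_norm (f : C₀(Y, ℝ)) (z : Y) : f z ≤ ‖f‖ :=
  norm_toBCF_eq_norm (f := f) ▸ f.toBCF.apply_le_norm z

lemma norm_le_of_forall_le {f : C₀(Y, ℝ)} {c : ℝ} (hc : 0 ≤ c) (hf : f ∈ posCone Y)
    (h : ∀ z, f z ≤ c) : ‖f‖ ≤ c := by
  rw [← norm_toBCF_eq_norm, BoundedContinuousFunction.norm_le hc]
  intro z
  simpa [abs_of_nonneg (hf z)] using h z

lemma norm_le_norm_add {f g : C₀(Y, ℝ)} (hf : f ∈ posCone Y) (hg : g ∈ posCone Y) :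
    ‖f‖ ≤ ‖f + g‖ :=
  norm_le_of_forall_le (norm_nonneg _) hf fun z =>
    (le_add_of_nonneg_right (hg z)).trans (apply_le_norm (f + g) z)

lemma le_norm_add_smul {v : C₀(Y, ℝ)} {y : Y} (hv : v y = 1) (P : C₀(Y, ℝ)) (t : ℝ) :
    P y + t ≤ ‖P + t • v‖ := by
  simpa [hv] using apply_le_norm (P + t • v) y

lemma norm_add_smul_le {P v : C₀(Y, ℝ)} {t c : ℝ} (hP : P ∈ posCone Y) (hv₀ : v ∈ posCone Y)
    (hv₁ : ∀ z, v z ≤ 1) (ht : 0 ≤ t) (hPc : ∀ z ∈ tsupport v, P z ≤ c) (hPnorm : ‖P‖ ≤ t + c) :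
    ‖P + t • v‖ ≤ t + c := by
  refine norm_le_of_forall_le ((norm_nonneg P).trans hPnorm)
    (fun z => add_nonneg (hP z) (mul_nonneg ht (hv₀ z))) fun z => ?_
  simp only [add_apply, smul_apply, smul_eq_mul]
  by_cases hz : z ∈ tsupport v
  · nlinarith [hPc z hz, hv₁ z]
  · rw [image_eq_zero_of_notMem_tsupport hz, mul_zero, add_zero]
    exact (apply_le_norm P z).trans hPnorm

lemma exists_bump [R1Space Y] [LocallyCompactSpace Y] {y : Y} {U : Set Y} (hU : IsOpen U)
    (hy : y ∈ U) :
    ∃ v : C₀(Y, ℝ), v y = 1 ∧ v ∈ posCone Y ∧ (∀ z, v z ≤ 1) ∧ tsupport v ⊆ U := by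
  obtain ⟨v, hv₁, hvc, hvU, hv⟩ :=
    exists_continuousMap_one_of_isCompact_subset_isOpen isCompact_singleton hU
      (singleton_subset_iff.mpr hy)
  exact ⟨⟨v, HasCompactSupport.is_zero_at_infty hvc⟩, hv₁ rfl, fun z => (hv z).1,
    fun z => (hv z).2, hvU⟩

end ZeroAtInftyContinuousMap

open ZeroAtInftyContinuousMap

lemma add_mem_posCone {X : Type*} [TopologicalSpace X] {f g : C₀(X, ℝ)} (hf : f ∈ posCone X)
    (hg : g ∈ posCone X) : f + g ∈ posCone X :=
  fun x => add_nonneg (hf x) (hg x)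

lemma smul_mem_posCone {X : Type*} [TopologicalSpace X] {f : C₀(X, ℝ)} {t : ℝ} (ht : 0 ≤ t)
    (hf : f ∈ posCone X) : t • f ∈ posCone X :=
  fun x => mul_nonneg ht (hf x)

section NormAdditive

variable {X Y : Type*} [TopologicalSpace X] [TopologicalSpace Y]

def IsNormAdditive (T : C₀(X, ℝ) → C₀(Y, ℝ)) : Prop :=
  ∀ f ∈ posCone X, ∀ g ∈ posCone X, ‖T (f + g)‖ = ‖T f + T g‖

variable {T : C₀(X, ℝ) → C₀(Y, ℝ)} {e f g : C₀(X, ℝ)}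

lemma norm_map_add_add_comm (hnorm : IsNormAdditive T)
    (he : e ∈ posCone X) (hf : f ∈ posCone X) (hg : g ∈ posCone X) :
    ‖T (e + f) + T g‖ = ‖T (e + g) + T f‖ := by
  rw [← hnorm _ (add_mem_posCone he hf) _ hg, ← hnorm _ (add_mem_posCone he hg) _ hf,
    add_right_comm]

variable [R1Space Y] [LocallyCompactSpace Y]

lemma map_apply_le_map_add_apply
    (hnorm : IsNormAdditive T) (hmaps : MapsTo T (posCone X) (posCone Y))
    (hsurj : SurjOn T (posCone X) (posCone Y))
    (he : e ∈ posCone X) (hf : f ∈ posCone X) (y : Y) : T e y ≤ T (e + f) y := by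
  set A := T (e + f)
  refine le_of_forall_pos_le_add fun ε hε => ?_
  obtain ⟨v, hvy, hv₀, hv₁, hvA⟩ :=
    exists_bump (isOpen_lt (map_continuous A) continuous_const) (lt_add_of_pos_right (A y) hε)
  obtain ⟨g, hg, hTg⟩ := hsurj (smul_mem_posCone (norm_nonneg A) hv₀)
  have hA := hmaps (add_mem_posCone he hf)
  have : T e y + ‖A‖ ≤ ‖A‖ + (A y + ε) := calc
    T e y + ‖A‖ ≤ ‖T e + ‖A‖ • v‖ := le_norm_add_smul hvy _ _
    _ = ‖T (e + g)‖ := by rw [← hTg, hnorm e he g hg]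
    _ ≤ ‖T (e + g) + T f‖ := norm_le_norm_add (hmaps (add_mem_posCone he hg)) (hmaps hf)
    _ = ‖A + ‖A‖ • v‖ := by rw [norm_map_add_add_comm hnorm he hg hf, hTg]
    _ ≤ ‖A‖ + (A y + ε) :=
      norm_add_smul_le hA hv₀ hv₁ (norm_nonneg A) (fun z hz => (hvA hz).le)
        (le_add_of_nonneg_right (by linarith [hA y]))
  linarith

/-- Otherwise a bump `T q` at `ζ`, disjoint from `T g`, would make
`‖T (e + g) + T q‖ = ‖T e + T (g + q)‖` exceed `‖T e‖ + ‖T g + T q‖`. -/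
lemma map_add_apply_le_norm_of_notMem_tsupport
    (hnorm : IsNormAdditive T) (hmaps : MapsTo T (posCone X) (posCone Y))
    (hsurj : SurjOn T (posCone X) (posCone Y))
    (he : e ∈ posCone X) (hg : g ∈ posCone X) {ζ : Y} (hζ : ζ ∉ tsupport (T g)) :
    T (e + g) ζ ≤ ‖T e‖ := by
  set w := T g
  obtain ⟨b, hbζ, hb₀, hb₁, hbw⟩ := exists_bump (isClosed_tsupport w).isOpen_compl hζ
  obtain ⟨q, hq, hTq⟩ := hsurj (smul_mem_posCone (norm_nonneg w) hb₀)
  have hwb : ‖w + ‖w‖ • b‖ ≤ ‖w‖ + 0 :=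
    norm_add_smul_le (hmaps hg) hb₀ hb₁ (norm_nonneg w)
      (fun z hz => (image_eq_zero_of_notMem_tsupport (hbw hz)).le) (by simp)
  have : T (e + g) ζ + ‖w‖ ≤ ‖T e‖ + ‖w‖ := calc
    T (e + g) ζ + ‖w‖ ≤ ‖T (e + g) + ‖w‖ • b‖ := le_norm_add_smul hbζ _ _
    _ = ‖T e + T (g + q)‖ := by
      rw [← hTq, ← hnorm _ (add_mem_posCone he hg) _ hq, ← hnorm _ he _ (add_mem_posCone hg hq),
        add_assoc]
    _ ≤ ‖T e‖ + ‖T (g + q)‖ := norm_add_le _ _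
    _ ≤ ‖T e‖ + ‖w‖ := by rw [hnorm g hg q hq, hTq]; linarith
  linarith

lemma map_add_apply_le_of_map_apply_eq_zero
    (hnorm : IsNormAdditive T) (hmaps : MapsTo T (posCone X) (posCone Y))
    (hsurj : SurjOn T (posCone X) (posCone Y))
    (he : e ∈ posCone X) (hf : f ∈ posCone X) {y : Y} (hfy : T f y = 0) :
    T (e + f) y ≤ T e y := by
  set B := T e
  set D := T f
  refine le_of_forall_pos_le_add fun ε hε => ?_
  have hB := hmaps he
  obtain ⟨v, hvy, hv₀, hv₁, hvW⟩ := exists_bump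
    ((isOpen_lt (map_continuous D) continuous_const).inter
      (isOpen_lt (map_continuous B) continuous_const))
    (show y ∈ {z | D z < ε / 2} ∩ {z | B z < B y + ε / 2} from
      ⟨show D y < ε / 2 by rw [hfy]; positivity, show B y < B y + ε / 2 by linarith⟩)
  set t := ‖B‖ + ‖D‖
  have ht : 0 ≤ t := by positivity
  obtain ⟨g, hg, hTg⟩ := hsurj (smul_mem_posCone ht hv₀)
  set H := T (e + g)
  have hH : ‖H‖ ≤ t + (B y + ε / 2) := by
    rw [hnorm e he g hg, hTg]
    exact norm_add_smul_le hB hv₀ hv₁ ht (fun z hz => (hvW hz).2.le)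
      (by linarith [norm_nonneg D, hB y])
  have hHD : ∀ z, (H + D) z ≤ t + (B y + ε) := by
    intro z
    rw [ZeroAtInftyContinuousMap.add_apply]
    by_cases hz : z ∈ tsupport v
    · have hDz : D z < ε / 2 := (hvW hz).1
      linarith [apply_le_norm H z]
    · have hz' : z ∉ tsupport (T g) := by
        rw [hTg, coe_smul]
        exact fun h => hz (tsupport_smul_subset_right (fun _ => t) v h)
      linarith [map_add_apply_le_norm_of_notMem_tsupport hnorm hmaps hsurj he hg hz',
        apply_le_norm D z, hB y]
  have : t + T (e + f) y ≤ t + (B y + ε) := calc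
    t + T (e + f) y ≤ ‖T (e + f) + t • v‖ := by rw [add_comm]; exact le_norm_add_smul hvy _ _
    _ = ‖H + D‖ := by rw [← hTg, norm_map_add_add_comm hnorm he hf hg]
    _ ≤ t + (B y + ε) :=
      norm_le_of_forall_le (by linarith [hB y])
        (add_mem_posCone (hmaps (add_mem_posCone he hg)) (hmaps hf)) hHD
  linarith

lemma map_add_apply_eq_of_map_apply_eq_zero
    (hnorm : IsNormAdditive T) (hmaps : MapsTo T (posCone X) (posCone Y))
    (hsurj : SurjOn T (posCone X) (posCone Y))
    (he : e ∈ posCone X) (hf : f ∈ posCone X) {y : Y} (hfy : T f y = 0) :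
    T (e + f) y = T e y :=
  le_antisymm (map_add_apply_le_of_map_apply_eq_zero hnorm hmaps hsurj he hf hfy)
    (map_apply_le_map_add_apply hnorm hmaps hsurj he hf y)

lemma map_apply_eq_of_eventuallyEq
    (hnorm : IsNormAdditive T) (hmaps : MapsTo T (posCone X) (posCone Y))
    (hsurj : SurjOn T (posCone X) (posCone Y))
    (hf : f ∈ posCone X) {y : Y} {x₀ : X}
    (hx₀ : x₀ ∈ ⋂ f ∈ {g : C₀(X, ℝ) | g ∈ posCone X ∧ 0 < T g y}, tsupport (⇑f : X → ℝ))
    (hef : ∀ x, f x ≤ e x) (hgerm : (e : X → ℝ) =ᶠ[𝓝 x₀] f) : T e y = T f y := by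
  have hd : e - f ∈ posCone X := fun x => by simpa using hef x
  have hx₀d : x₀ ∉ tsupport (⇑(e - f) : X → ℝ) := by
    rw [notMem_tsupport_iff_eventuallyEq]
    filter_upwards [hgerm] with x hx
    simp [hx]
  have hTd : T (e - f) y = 0 :=
    le_antisymm (not_lt.mp fun h => hx₀d (mem_iInter₂.mp hx₀ _ ⟨hd, h⟩)) (hmaps hd y)
  rw [← map_add_apply_eq_of_map_apply_eq_zero hnorm hmaps hsurj hf hd hTd, add_sub_cancel]

end NormAdditive

theorem stmt14_general {X Y : Type*} [TopologicalSpace X]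
    [TopologicalSpace Y] [T2Space Y] [LocallyCompactSpace Y]
    (T : C₀(X, ℝ) → C₀(Y, ℝ))
    (hbij : Set.BijOn T (posCone X) (posCone Y))
    (hnorm : ∀ f ∈ posCone X, ∀ g ∈ posCone X, ‖T (f + g)‖ = ‖T f + T g‖)
    (y : Y) (x₀ : X)
    (hx₀ : (⋂ f ∈ {g : C₀(X, ℝ) | g ∈ posCone X ∧ 0 < T g y},
      tsupport (⇑f : X → ℝ)) = {x₀})
    (e₁ e₂ : C₀(X, ℝ)) (he₁ : e₁ ∈ posCone X) (he₂ : e₂ ∈ posCone X)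
    (U₁ U₂ : Set X) (hU₁ : IsOpen U₁) (hU₂ : IsOpen U₂)
    (hxU₁ : x₀ ∈ U₁) (hxU₂ : x₀ ∈ U₂)
    (he₁U : ∀ x ∈ U₁, e₁ x = 1) (he₂U : ∀ x ∈ U₂, e₂ x = 1) :
    T e₁ y = T e₂ y := by
  have hx₀mem : x₀ ∈ ⋂ f ∈ {g : C₀(X, ℝ) | g ∈ posCone X ∧ 0 < T g y},
      tsupport (⇑f : X → ℝ) := hx₀ ▸ rfl
  have hm : min e₁ e₂ ∈ posCone X := fun x => le_min (he₁ x) (he₂ x)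
  have hU : U₁ ∩ U₂ ∈ 𝓝 x₀ := inter_mem (hU₁.mem_nhds hxU₁) (hU₂.mem_nhds hxU₂)
  have h₁ : T e₁ y = T (min e₁ e₂) y :=
    map_apply_eq_of_eventuallyEq hnorm hbij.mapsTo hbij.surjOn hm hx₀mem
      (fun x => by simp) (by filter_upwards [hU] with x hx; simp [he₁U x hx.1, he₂U x hx.2])
  have h₂ : T e₂ y = T (min e₁ e₂) y :=
    map_apply_eq_of_eventuallyEq hnorm hbij.mapsTo hbij.surjOn hm hx₀mem
      (fun x => by simp) (by filter_upwards [hU] with x hx; simp [he₁U x hx.1, he₂U x hx.2])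
  rw [h₁, h₂]

/-- **Lemma 3.2.** Let `T` be a norm additive bijection between positive cones, `y ∈ Y`,
and `x₀` the unique point with `⋂_{f ∈ F_y} supp(f) = {x₀}`. If `e₁, e₂ ∈ C₀(X)⁺` both
equal `1` on (possibly different) open neighborhoods of `x₀`, then `Te₁(y) = Te₂(y)`. -/
theorem stmt14 {X Y : Type*} [TopologicalSpace X] [T2Space X] [LocallyCompactSpace X]
    [TopologicalSpace Y] [T2Space Y] [LocallyCompactSpace Y]
    (T : C₀(X, ℝ) → C₀(Y, ℝ))
    (hbij : Set.BijOn T (posCone X) (posCone Y))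
    (hnorm : ∀ f ∈ posCone X, ∀ g ∈ posCone X, ‖T (f + g)‖ = ‖T f + T g‖)
    (y : Y) (x₀ : X)
    (hx₀ : (⋂ f ∈ {g : C₀(X, ℝ) | g ∈ posCone X ∧ 0 < T g y},
      tsupport (⇑f : X → ℝ)) = {x₀})
    (e₁ e₂ : C₀(X, ℝ)) (he₁ : e₁ ∈ posCone X) (he₂ : e₂ ∈ posCone X)
    (U₁ U₂ : Set X) (hU₁ : IsOpen U₁) (hU₂ : IsOpen U₂)
    (hxU₁ : x₀ ∈ U₁) (hxU₂ : x₀ ∈ U₂)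
    (he₁U : ∀ x ∈ U₁, e₁ x = 1) (he₂U : ∀ x ∈ U₂, e₂ x = 1) :
    T e₁ y = T e₂ y :=
  stmt14_general T hbij hnorm y x₀ hx₀ e₁ e₂ he₁ he₂ U₁ U₂ hU₁ hU₂ hxU₁ hxU₂ he₁U he₂U
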